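/- Let A be a finite set of non-negative integers with 0 ∈ A, gcd(A) = 1, and b := max A (so b ≥ 1). Let B := {b − x : x ∈ A} (so 0 ∈ B, max B = b, gcd(B) = 1), let C_B := {(n,h) ∈ ℕ × ℕ : n ∈ hB}, and for 0 ≤ c < b let S'_c := {(n,h) ∈ C_B : n ≡ c (mod b)}. Fix 0 ≤ a < b and suppose (g,k) is the virtual generator of S_a for A. Then g ≤ b·k, and (b·k − g, k) is the virtual generator of S'_{(b−a) mod b} for B. -/
import Mathlib

open Pointwise

def iterFin (A : Finset ℕ) : ℕ → Finset ℕ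
  | 0 => {0}
  | n + 1 => A + iterFin A n

def coneNat (A : Finset ℕ) : Set (ℕ × ℕ) := {p | p.1 ∈ iterFin A p.2}

def lambdaPlus (b : ℕ) : Set (ℕ × ℕ) := {q | ∃ m n : ℕ, q = (b * n, m + n)}

def resClass (A : Finset ℕ) (b a : ℕ) : Set (ℕ × ℕ) := {p ∈ coneNat A | p.1 % b = a}

lemma iterFin_le {A : Finset ℕ} {b : ℕ} (hA : ∀ x ∈ A, x ≤ b) :
    ∀ h n, n ∈ iterFin A h → n ≤ b * h := by
  intro h
  induction h with
  | zero => intro n hn; simp [iterFin] at hn; omega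
  | succ h ih =>
    intro n hn
    rw [iterFin] at hn
    obtain ⟨x, hx, m, hm, rfl⟩ := Finset.mem_add.mp hn
    have h1 := hA x hx
    have h2 := ih m hm
    have e : b*(h+1) = b*h + b := by ring
    omega

lemma iterFin_flip {A : Finset ℕ} {b : ℕ} (hA : ∀ x ∈ A, x ≤ b) :
    ∀ h n, n ∈ iterFin A h → (b*h - n) ∈ iterFin (A.image fun x => b - x) h := by
  intro h
  induction h with
  | zero => intro n hn; simp [iterFin] at hn ⊢
  | succ h ih =>
    intro n hn
    rw [iterFin] at hn ⊢
    obtain ⟨x, hx, m, hm, rfl⟩ := Finset.mem_add.mp hn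
    have h1 := hA x hx
    have h2 := iterFin_le hA h m hm
    refine Finset.mem_add.mpr ⟨b - x, Finset.mem_image.mpr ⟨x, hx, rfl⟩, b*h - m, ih m hm, ?_⟩
    have e : b*(h+1) = b*h + b := by ring
    omega

lemma double_image {A : Finset ℕ} {b : ℕ} (hA : ∀ x ∈ A, x ≤ b) :
    ((A.image fun x => b - x).image fun x => b - x) = A := by
  ext y
  simp only [Finset.mem_image]
  constructor
  · rintro ⟨z, ⟨x, hx, rfl⟩, rfl⟩
    have := hA x hx
    have : b - (b - x) = x := by omega
    rwa [this]
  · intro hy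
    exact ⟨b - y, ⟨y, hy, rfl⟩, by have := hA y hy; omega⟩

lemma mod_flip {b a n h : ℕ} (hb : 1 ≤ b) (ha : a < b) (hn : n ≤ b*h)
    (hm : n % b = a) : (b*h - n) % b = (b - a) % b := by
  have key : (b*h - n) ≡ (b - a) [MOD b] := by
    have h1 : (b*h - n) + n = b*h := by omega
    have h2 : (b - a) + a = b := by omega
    have hna : n ≡ a [MOD b] := by
      unfold Nat.ModEq
      rw [hm, Nat.mod_eq_of_lt ha]
    have c1 : (b*h - n) + a ≡ (b*h - n) + n [MOD b] := Nat.ModEq.add_left _ hna.symm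
    have c2 : (b*h - n) + n ≡ (b - a) + a [MOD b] := by
      rw [h1, h2]
      exact (Nat.modEq_zero_iff_dvd.mpr ⟨h, rfl⟩).trans (Nat.modEq_zero_iff_dvd.mpr ⟨1, by ring⟩).symm
    exact (c1.trans c2).add_right_cancel' a
  exact key

lemma flip_resClass {A : Finset ℕ} {b a n h : ℕ} (hA : ∀ x ∈ A, x ≤ b)
    (hb : 1 ≤ b) (ha : a < b) (hp : (n, h) ∈ resClass A b a) :
    (b*h - n, h) ∈ resClass (A.image fun x => b - x) b ((b - a) % b) := by
  obtain ⟨hc, hr⟩ := hp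
  refine ⟨iterFin_flip hA h n hc, ?_⟩
  exact mod_flip hb ha (iterFin_le hA h n hc) hr

theorem virtual_generator_symmetry (A : Finset ℕ) (h0 : 0 ∈ A)
    (hgcd : A.gcd id = 1) (b : ℕ) (hb : IsGreatest (A : Set ℕ) b) (hb1 : 1 ≤ b)
    (a : ℕ) (ha : a < b) (g k : ℕ)
    (hvg : resClass A b a ⊆ (fun r => (g, k) + r) '' lambdaPlus b ∧
      (((fun r => (g, k) + r) '' lambdaPlus b) \ resClass A b a).Finite) :
    g ≤ b * k ∧
      (resClass (A.image fun x => b - x) b ((b - a) % b) ⊆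
          (fun r => (b * k - g, k) + r) '' lambdaPlus b ∧
        (((fun r => (b * k - g, k) + r) '' lambdaPlus b) \
            resClass (A.image fun x => b - x) b ((b - a) % b)).Finite) := by
  obtain ⟨hsub, hfin⟩ := hvg
  have hAb : ∀ x ∈ A, x ≤ b := fun x hx => hb.2 hx
  have hBb : ∀ x ∈ A.image (fun x => b - x), x ≤ b := by
    intro x hx
    obtain ⟨y, _, rfl⟩ := Finset.mem_image.mp hx
    omega
  -- Step 1: g ≤ b * k
  have hgk : g ≤ b * k := by
    set f : ℕ → ℕ × ℕ := fun n => (g + b * n, k + n) with hf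
    have finj : Function.Injective f := by
      intro x y hxy
      have h2 : k + x = k + y := congrArg Prod.snd hxy
      omega
    have fmem : ∀ n, f n ∈ (fun r => (g, k) + r) '' lambdaPlus b := by
      intro n
      exact ⟨(b * n, 0 + n), ⟨0, n, rfl⟩, by simp [hf, Prod.ext_iff]⟩
    have : ∃ n, f n ∈ resClass A b a := by
      by_contra hcon
      push_neg at hcon
      have : Set.range f ⊆ ((fun r => (g, k) + r) '' lambdaPlus b) \ resClass A b a := by
        rintro _ ⟨n, rfl⟩
        exact ⟨fmem n, hcon n⟩
      exact (Set.infinite_range_of_injective finj) (hfin.subset this)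
    obtain ⟨n, hc, _⟩ := this
    have := iterFin_le hAb (k + n) (g + b * n) hc
    have e : b * (k + n) = b * k + b * n := by ring
    omega
  refine ⟨hgk, ?_, ?_⟩
  -- Step 2: inclusion
  · rintro ⟨n, h⟩ hp
    have hp' := flip_resClass hBb hb1 (Nat.mod_lt _ hb1) hp
    rw [double_image hAb] at hp'
    have hres : (b - (b - a) % b) % b = a := by
      rcases Nat.eq_zero_or_pos a with rfl | hapos
      · simp
      · have h1 : (b - a) % b = b - a := Nat.mod_eq_of_lt (by omega)
        rw [h1]
        have : b - (b - a) = a := by omega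
        rw [this]
        exact Nat.mod_eq_of_lt ha
    rw [hres] at hp'
    obtain ⟨q, ⟨m, n', rfl⟩, hpe⟩ := hsub hp'
    simp only [Prod.mk_add_mk, Prod.mk.injEq] at hpe
    obtain ⟨he1, he2⟩ := hpe
    have hnle : n ≤ b * h := iterFin_le hBb h n hp.1
    have e : b * h = b * k + b * m + b * n' := by rw [← he2]; ring
    refine ⟨(b * m, n' + m), ⟨n', m, rfl⟩, ?_⟩
    simp only [Prod.mk_add_mk, Prod.mk.injEq]
    exact ⟨by omega, by omega⟩
  -- Step 3: finiteness
  · set σ : ℕ × ℕ → ℕ × ℕ := fun q => (b * q.2 - q.1, q.2) with hσ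
    apply Set.Finite.subset (hfin.image σ)
    rintro ⟨n, h⟩ ⟨⟨q, ⟨m, n', rfl⟩, hpe⟩, hns⟩
    simp only [Prod.mk_add_mk, Prod.mk.injEq] at hpe
    obtain ⟨he1, he2⟩ := hpe
    have e : b * h = b * k + b * m + b * n' := by rw [← he2]; ring
    set p : ℕ × ℕ := (g + b * m, h) with hpdef
    have hplam : p ∈ (fun r => (g, k) + r) '' lambdaPlus b := by
      refine ⟨(b * m, n' + m), ⟨n', m, rfl⟩, ?_⟩
      simp only [Prod.mk_add_mk, Prod.mk.injEq, hpdef]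
      refine ⟨trivial, ?_⟩
      omega
    have hσp : σ p = (n, h) := by
      simp only [hσ, hpdef, Prod.mk.injEq]
      refine ⟨?_, trivial⟩
      omega
    have hpns : p ∉ resClass A b a := by
      intro hps
      apply hns
      have := flip_resClass hAb hb1 ha hps
      rw [← hσp]
      exact this
    exact ⟨p, ⟨hplam, hpns⟩, hσp⟩
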